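/- Let f be Nash's map for a finite game and suppose f_n(σ) ≠ σ_n for player n at profile σ. Writing f_n(σ) = λ_n(σ)σ_n + (1−λ_n(σ))r_n(σ) with λ_n(σ) = 1/(1+Σ_{t_n}φ_{n,t_n}(σ)) and r_n(σ) = φ_n(σ)/Σ_{t_n}φ_{n,t_n}(σ), the probability vector r_n(σ) assigns positive probability to a pure strategy s_n if and only if G_n(s_n, σ_{-n}) > G_n(σ); in particular r_n(σ) assigns zero probability to at least one pure strategy in the support of σ_n. -/
import Mathlib


open Finset

variable {N : ℕ} {S : Fin N → Type*} [∀ n, Fintype (S n)] [∀ n, DecidableEq (S n)]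

/-- The mixed-strategy profile `σ` lies in `Σ = Π_n Σ_n` (a product of simplices). -/
def InSimplex (σ : ∀ n, S n → ℝ) : Prop :=
  (∀ n s, 0 ≤ σ n s) ∧ ∀ n, ∑ s, σ n s = 1

/-- A pure strategy viewed as a mixed strategy (Dirac distribution). -/
noncomputable def pureStrat {n : Fin N} (a : S n) : S n → ℝ :=
  fun b => if b = a then 1 else 0

/-- Multilinear extension of the payoff `u n` of player `n` to mixed profiles. -/
noncomputable def expPay (u : ∀ _ : Fin N, (∀ m, S m) → ℝ)
    (σ : ∀ n, S n → ℝ) (n : Fin N) : ℝ :=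
  ∑ s : ∀ m, S m, (∏ m, σ m (s m)) * u n s

/-- `G_n(a, σ_{-n})`: player `n`'s payoff from the pure strategy `a` against `σ_{-n}`. -/
noncomputable def devPay (u : ∀ _ : Fin N, (∀ m, S m) → ℝ)
    (σ : ∀ n, S n → ℝ) (n : Fin N) (a : S n) : ℝ :=
  expPay u (Function.update σ n (pureStrat a)) n

/-- `σ` is a Nash equilibrium. -/
def IsNashEq (u : ∀ _ : Fin N, (∀ m, S m) → ℝ) (σ : ∀ n, S n → ℝ) : Prop :=
  InSimplex σ ∧ ∀ n (a : S n), devPay u σ n a ≤ expPay u σ n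

/-- `φ_{n,s_n}(σ) = max {0, G_n(s_n, σ_{-n}) − G_n(σ)}`. -/
noncomputable def phi (u : ∀ _ : Fin N, (∀ m, S m) → ℝ)
    (σ : ∀ n, S n → ℝ) (n : Fin N) (a : S n) : ℝ :=
  max 0 (devPay u σ n a - expPay u σ n)

/-- Nash's map `f`. -/
noncomputable def nashMap (u : ∀ _ : Fin N, (∀ m, S m) → ℝ)
    (σ : ∀ n, S n → ℝ) : ∀ n, S n → ℝ :=
  fun n a => (σ n a + phi u σ n a) / (1 + ∑ t, phi u σ n t)


lemma expPay_decomp (u : ∀ _ : Fin N, (∀ m, S m) → ℝ) (σ : ∀ n, S n → ℝ) (n : Fin N) :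
    expPay u σ n = ∑ a, σ n a * devPay u σ n a := by
  unfold devPay expPay
  simp_rw [Finset.mul_sum, Finset.sum_comm (s := Finset.univ (α := S n))]
  refine Finset.sum_congr rfl fun s _ => ?_
  have hprod : ∀ a : S n, ∏ m, Function.update σ n (pureStrat a) m (s m)
      = (if s n = a then 1 else 0) * ∏ m ∈ Finset.univ.erase n, σ m (s m) := by
    intro a
    rw [← Finset.mul_prod_erase Finset.univ _ (Finset.mem_univ n)]
    congr 1
    · simp [pureStrat]
    · exact Finset.prod_congr rfl fun m hm =>
        congrFun (Function.update_of_ne (Finset.ne_of_mem_erase hm) _ _) _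
  simp_rw [hprod]
  rw [Finset.sum_eq_single (s n)]
  · rw [← Finset.mul_prod_erase Finset.univ (fun m => σ m (s m)) (Finset.mem_univ n)]
    simp; ring
  · intro b _ hb; simp [Ne.symm hb]
  · simp

theorem nashMap_adjustment_direction
    (u : ∀ _ : Fin N, (∀ m, S m) → ℝ) (σ : ∀ n, S n → ℝ) (hσ : InSimplex σ)
    (n : Fin N) (hne : nashMap u σ n ≠ σ n) :
    -- writing f_n(σ) = λ_n(σ) σ_n + (1 − λ_n(σ)) r_n(σ):
    (∀ a : S n,
      nashMap u σ n a =
        (1 / (1 + ∑ t, phi u σ n t)) * σ n a +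
        (1 - 1 / (1 + ∑ t, phi u σ n t)) *
          (phi u σ n a / ∑ t, phi u σ n t)) ∧
    -- r_n(σ) gives positive probability to a iff a is a strictly better reply than σ
    (∀ a : S n,
      0 < phi u σ n a / ∑ t, phi u σ n t ↔ expPay u σ n < devPay u σ n a) ∧
    -- r_n(σ) assigns zero probability to some strategy in the support of σ_n
    (∃ a : S n, 0 < σ n a ∧ phi u σ n a / ∑ t, phi u σ n t = 0) := by

  set T := ∑ t, phi u σ n t with hT
  have hphi0 : ∀ a, 0 ≤ phi u σ n a := fun a => le_max_left _ _
  have hT0 : 0 ≤ T := Finset.sum_nonneg fun a _ => hphi0 a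
  have hTpos : 0 < T := by
    rcases lt_or_eq_of_le hT0 with h | h
    · exact h
    · exfalso
      have hz : ∀ a, phi u σ n a = 0 := by
        intro a
        have := (Finset.sum_eq_zero_iff_of_nonneg fun a _ => hphi0 a).mp h.symm
        exact this a (Finset.mem_univ a)
      apply hne
      funext a
      simp [nashMap, hz, ← hT, ← h]
  have hT1 : (0:ℝ) < 1 + T := by linarith
  refine ⟨?_, ?_, ?_⟩
  · intro a
    have : nashMap u σ n a = (σ n a + phi u σ n a) / (1 + T) := rfl
    rw [this]
    field_simp
    ring
  · intro a
    rw [div_pos_iff]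
    constructor
    · rintro (⟨h, _⟩ | ⟨_, h⟩)
      · have := lt_max_iff.mp h
        simp at this
        linarith [this]
      · linarith
    · intro h
      exact Or.inl ⟨lt_max_iff.mpr (Or.inr (by linarith)), hTpos⟩
  · by_contra hcon
    push_neg at hcon
    have key : ∀ a, 0 < σ n a → expPay u σ n < devPay u σ n a := by
      intro a ha
      have h1 := hcon a ha
      have h2 : 0 < phi u σ n a := by
        rcases lt_or_eq_of_le (hphi0 a) with h | h
        · exact h
        · exact absurd (by rw [← h]; simp) h1
      have := lt_max_iff.mp h2
      simp at this
      linarith [this]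
    have hsum := hσ.2 n
    have hlt : ∑ a, σ n a * expPay u σ n < ∑ a, σ n a * devPay u σ n a := by
      obtain ⟨a0, ha0⟩ : ∃ a, 0 < σ n a := by
        by_contra h
        push_neg at h
        have : ∀ a ∈ Finset.univ, σ n a = 0 := fun a _ => le_antisymm (h a) (hσ.1 n a)
        rw [Finset.sum_eq_zero this] at hsum
        norm_num at hsum
      refine Finset.sum_lt_sum (fun a _ => ?_) ⟨a0, Finset.mem_univ a0, ?_⟩
      · rcases lt_or_eq_of_le (hσ.1 n a) with h | h
        · exact mul_le_mul_of_nonneg_left (le_of_lt (key a h)) (le_of_lt h)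
        · simp [← h]
      · exact mul_lt_mul_of_pos_left (key a0 ha0) ha0
    rw [← Finset.sum_mul, hsum, one_mul, ← expPay_decomp] at hlt
    exact lt_irrefl _ hlt
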